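/- arXiv:2212.14344 — 8 statements merged into one kernel-verified Lean document; each statement's English description precedes it below -/
import Mathlib

section
/- A continuous map G : ℝ^n × ℝ^n → ℝ^n is a discrete gradient of V if and only if, for all u ≠ u', writing w(u,u') := G(u,u') − ((V(u')−V(u))/‖u'−u‖²)(u'−u), one has ⟨w(u,u'), u'−u⟩ = 0, and moreover, for every u ∈ ℝ^n, w(u,u') − P_{(u'−u)^⊥}∇V(u) tends to 0 as u' tends to u (with u' ≠ u), where P_{(u'−u)^⊥}v = v − (⟨v, u'−u⟩/‖u'−u‖²)(u'−u) is the orthogonal projection onto the hyperplane perpendicular to u'−u. -/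
open scoped RealInnerProductSpace

/-- `G` is a discrete gradient of `V`: it is continuous,
satisfies the secant property `⟪G u u', u' - u⟫ = V u' - V u`,
and coincides with the gradient on the diagonal. -/
def IsDiscreteGradient {E : Type*} [NormedAddCommGroup E] [InnerProductSpace ℝ E]
    [CompleteSpace E] (V : E → ℝ) (G : E → E → E) : Prop :=
  Continuous (fun p : E × E => G p.1 p.2) ∧
  (∀ u u' : E, ⟪G u u', u' - u⟫ = V u' - V u) ∧
  (∀ u : E, G u u = gradient V u)

/-! Subtracting the gradient's projection from `w(u,u')` leaves `G(u,u') - ∇V(u)` minus the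
first-order Taylor remainder of `V` at `u` multiplied by `(u' - u)/‖u' - u‖²`, and that term
tends to `0` because `V` is differentiable at `u`. So the limit condition says exactly that
`G(u, ·)` tends to `∇V(u)` on the punctured neighbourhood of `u`, which for a continuous `G` is
`G(u,u) = ∇V(u)`. The orthogonality of `w(u,u')` to `u' - u` is a rewriting of the secant
property. -/

open Filter Topology

theorem ContinuousAt.tendsto_nhdsNE_iff {X Y : Type*} [TopologicalSpace X] [TopologicalSpace Y]
    [T2Space Y] {f : X → Y} {x : X} [(𝓝[≠] x).NeBot] (hf : ContinuousAt f x) {y : Y} :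
    Tendsto f (𝓝[≠] x) (𝓝 y) ↔ f x = y :=
  ⟨fun h => tendsto_nhds_unique (hf.tendsto.mono_left nhdsWithin_le_nhds) h,
    fun h => h ▸ hf.tendsto.mono_left nhdsWithin_le_nhds⟩

section InnerProductSpace

variable {E : Type*} [NormedAddCommGroup E] [InnerProductSpace ℝ E]

theorem inner_sub_div_norm_sq_smul_self_eq_zero_iff {x v : E} (hv : v ≠ 0) (c : ℝ) :
    ⟪x - (c / ‖v‖ ^ 2) • v, v⟫ = 0 ↔ ⟪x, v⟫ = c := by
  rw [inner_sub_left, real_inner_smul_left, real_inner_self_eq_norm_sq,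
    div_mul_cancel₀ _ (pow_ne_zero 2 (norm_ne_zero_iff.mpr hv)), sub_eq_zero]

theorem norm_div_norm_sq_smul_self (a : ℝ) (v : E) :
    ‖(a / ‖v‖ ^ 2) • v‖ = ‖v‖⁻¹ * |a| := by
  rcases eq_or_ne v 0 with rfl | hv
  · simp
  have hv' : ‖v‖ ≠ 0 := norm_ne_zero_iff.mpr hv
  rw [norm_smul, Real.norm_eq_abs, abs_div, abs_pow, abs_norm]
  field_simp

variable [CompleteSpace E]

theorem HasGradientAt.tendsto_remainder_div_norm_sq_smul {V : E → ℝ} {g u : E}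
    (h : HasGradientAt V g u) :
    Tendsto (fun u' => ((V u' - V u - ⟪g, u' - u⟫) / ‖u' - u‖ ^ 2) • (u' - u)) (𝓝 u) (𝓝 0) := by
  refine squeeze_zero_norm (fun u' => ?_) (hasGradientAt_iff_tendsto.mp h)
  rw [norm_div_norm_sq_smul_self, ← Real.norm_eq_abs]

theorem DifferentiableAt.tendsto_sub_projection_gradient_iff {V : E → ℝ} {u : E}
    (hV : DifferentiableAt ℝ V u) (F : E → E) :
    Tendsto (fun u' => (F u' - ((V u' - V u) / ‖u' - u‖ ^ 2) • (u' - u)) -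
        (gradient V u - (⟪gradient V u, u' - u⟫ / ‖u' - u‖ ^ 2) • (u' - u))) (𝓝[≠] u) (𝓝 0) ↔
      Tendsto F (𝓝[≠] u) (𝓝 (gradient V u)) := by
  have hR := hV.hasGradientAt.tendsto_remainder_div_norm_sq_smul.mono_left
    (nhdsWithin_le_nhds (s := {u}ᶜ))
  set g := gradient V u
  have hsplit : (fun u' => (F u' - ((V u' - V u) / ‖u' - u‖ ^ 2) • (u' - u)) -
        (g - (⟪g, u' - u⟫ / ‖u' - u‖ ^ 2) • (u' - u))) =
      fun u' => (F u' - g) - ((V u' - V u - ⟪g, u' - u⟫) / ‖u' - u‖ ^ 2) • (u' - u) := by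
    funext u'
    rw [sub_div (V u' - V u), sub_smul]
    abel
  rw [hsplit, ← tendsto_sub_nhds_zero_iff (u := F)]
  refine ⟨fun h => ?_, fun h => ?_⟩
  · simpa only [sub_add_cancel, add_zero] using h.add hR
  · simpa only [sub_zero] using h.sub hR

theorem DifferentiableAt.apply_self_eq_gradient_iff {V : E → ℝ} {u : E}
    (hV : DifferentiableAt ℝ V u) {F : E → E} (hF : ContinuousAt F u) :
    F u = gradient V u ↔
      Tendsto (fun u' => (F u' - ((V u' - V u) / ‖u' - u‖ ^ 2) • (u' - u)) -
        (gradient V u - (⟪gradient V u, u' - u⟫ / ‖u' - u‖ ^ 2) • (u' - u))) (𝓝[≠] u) (𝓝 0) := by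
  rw [hV.tendsto_sub_projection_gradient_iff]
  rcases subsingleton_or_nontrivial E with hE | hE
  · exact iff_of_true (Subsingleton.elim _ _)
      (tendsto_nhds_of_eventually_eq (.of_forall fun _ => Subsingleton.elim _ _))
  · exact hF.tendsto_nhdsNE_iff.symm

end InnerProductSpace

/-- A continuous map `G` is a discrete gradient of `V` if and only if, for `u ≠ u'`,
`w(u,u') := G(u,u') − ((V u' − V u)/‖u'−u‖²)(u'−u)` is orthogonal to `u'−u`, and for every
`u`, `w(u,u') − P_{(u'−u)^⊥}(∇V u)` tends to `0` as `u' → u`, `u' ≠ u`, where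
`P_{(u'−u)^⊥} v = v − (⟪v,u'−u⟫/‖u'−u‖²)(u'−u)`. -/
theorem isDiscreteGradient_iff {n : ℕ}
    (V : EuclideanSpace ℝ (Fin n) → ℝ) (hV : ContDiff ℝ 1 V)
    (G : EuclideanSpace ℝ (Fin n) → EuclideanSpace ℝ (Fin n) → EuclideanSpace ℝ (Fin n))
    (hGcont : Continuous (fun p : EuclideanSpace ℝ (Fin n) × EuclideanSpace ℝ (Fin n) =>
      G p.1 p.2)) :
    IsDiscreteGradient V G ↔
      ((∀ u u' : EuclideanSpace ℝ (Fin n), u ≠ u' →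
          ⟪G u u' - ((V u' - V u) / ‖u' - u‖ ^ 2) • (u' - u), u' - u⟫ = 0) ∧
       (∀ u : EuclideanSpace ℝ (Fin n),
          Filter.Tendsto
            (fun u' : EuclideanSpace ℝ (Fin n) =>
              (G u u' - ((V u' - V u) / ‖u' - u‖ ^ 2) • (u' - u)) -
              (gradient V u - (⟪gradient V u, u' - u⟫ / ‖u' - u‖ ^ 2) • (u' - u)))
            (nhdsWithin u {u}ᶜ) (nhds 0))) := by
  have hdiff : Differentiable ℝ V := hV.differentiable one_ne_zero
  have hG : ∀ u, Continuous (G u) := fun u => hGcont.comp (Continuous.prodMk_right u)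
  refine ⟨fun ⟨_, hsec, hdiag⟩ => ⟨fun u u' hne => ?_, fun u => ?_⟩,
    fun ⟨horth, hlim⟩ => ⟨hGcont, fun u u' => ?_, fun u => ?_⟩⟩
  · exact (inner_sub_div_norm_sq_smul_self_eq_zero_iff (sub_ne_zero.mpr hne.symm) _).mpr
      (hsec u u')
  · exact ((hdiff u).apply_self_eq_gradient_iff (hG u).continuousAt).mp (hdiag u)
  · rcases eq_or_ne u u' with rfl | hne
    · simp
    · exact (inner_sub_div_norm_sq_smul_self_eq_zero_iff (sub_ne_zero.mpr hne.symm) _).mp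
        (horth u u' hne)
  · exact ((hdiff u).apply_self_eq_gradient_iff (hG u).continuousAt).mpr (hlim u)
end

section
/- Let M be a symmetric positive definite d×d real matrix, V : ℝ^d → ℝ, and let G : ℝ^d × ℝ^d → ℝ^d satisfy ⟨G(q,q'), q'−q⟩ = V(q')−V(q) for all q, q'. If q^{n+1} = q^n + τ M^{-1}(p^{n+1}+p^n)/2 and p^{n+1} = p^n − τ G(q^n, q^{n+1}), then the Hamiltonian H(q,p) = ½ pᵀM^{-1}p + V(q) is exactly preserved: H(q^{n+1},p^{n+1}) = H(q^n,p^n). -/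
/-!
Write `A = M⁻¹`. Since `A` is symmetric, the kinetic energy changes by
`½ (p' - p)ᵀ A (p' + p) = -(τ/2) G(q,q')ᵀ A (p' + p)`, while the discrete-gradient property and
the position update make the potential change by
`G(q,q')ᵀ (q' - q) = (τ/2) G(q,q')ᵀ A (p' + p)`; the two cancel.
-/

open scoped Matrix
open Matrix

theorem Matrix.IsSymm.dotProduct_mulVec_comm {R n : Type*} [CommSemiring R] [Fintype n]
    {A : Matrix n n R} (hA : A.IsSymm) (x y : n → R) :
    x ⬝ᵥ A *ᵥ y = y ⬝ᵥ A *ᵥ x := by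
  rw [dotProduct_mulVec, ← mulVec_transpose, hA.eq, dotProduct_comm]

theorem Matrix.IsSymm.dotProduct_mulVec_self_sub {R n : Type*} [CommRing R] [Fintype n]
    {A : Matrix n n R} (hA : A.IsSymm) (x y : n → R) :
    x ⬝ᵥ A *ᵥ x - y ⬝ᵥ A *ᵥ y = (x - y) ⬝ᵥ A *ᵥ (x + y) := by
  rw [sub_dotProduct, mulVec_add, dotProduct_add, dotProduct_add, hA.dotProduct_mulVec_comm x y]
  ring

def hamiltonian {R n : Type*} [Field R] [Fintype n] (A : Matrix n n R) (V : (n → R) → R)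
    (q p : n → R) : R :=
  1 / 2 * (p ⬝ᵥ A *ᵥ p) + V q

theorem hamiltonian_velocityDiscreteGradient_step {R n : Type*} [Field R] [Fintype n]
    {A : Matrix n n R} (hA : A.IsSymm) {V : (n → R) → R} {G : (n → R) → (n → R) → (n → R)}
    (hG : ∀ q q', G q q' ⬝ᵥ (q' - q) = V q' - V q) {τ : R} {q q' p p' : n → R}
    (hq : q' = q + τ • A *ᵥ ((1 / 2 : R) • (p' + p))) (hp : p' = p - τ • G q q') :
    hamiltonian A V q' p' = hamiltonian A V q p := by
  have potential : V q' - V q = τ / 2 * (G q q' ⬝ᵥ A *ᵥ (p' + p)) := by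
    rw [← hG, hq, add_sub_cancel_left, mulVec_smul, dotProduct_smul, dotProduct_smul,
      smul_eq_mul, smul_eq_mul]
    ring
  have kinetic : p' ⬝ᵥ A *ᵥ p' - p ⬝ᵥ A *ᵥ p = -τ * (G q q' ⬝ᵥ A *ᵥ (p' + p)) := by
    rw [hA.dotProduct_mulVec_self_sub, show p' - p = -(τ • G q q') by rw [hp]; abel,
      neg_dotProduct, smul_dotProduct, smul_eq_mul]
    ring
  unfold hamiltonian
  linear_combination (1 / 2 : R) * kinetic + potential

/-- One step of the velocity discrete gradient method
`q' = q + τ M⁻¹ (p'+p)/2`, `p' = p − τ G(q,q')` exactly preserves the Hamiltonian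
`H(q,p) = ½ pᵀ M⁻¹ p + V(q)`, where `M` is symmetric positive definite and `G` has the
discrete-gradient secant property for `V`. -/
theorem velocity_discrete_gradient_method_preserves_energy {d : ℕ}
    (M : Matrix (Fin d) (Fin d) ℝ) (hM : M.PosDef)
    (V : (Fin d → ℝ) → ℝ)
    (G : (Fin d → ℝ) → (Fin d → ℝ) → (Fin d → ℝ))
    (hG : ∀ q q' : Fin d → ℝ, G q q' ⬝ᵥ (q' - q) = V q' - V q)
    (τ : ℝ) (q q' p p' : Fin d → ℝ)
    (hq : q' = q + τ • M⁻¹.mulVec ((1 / 2 : ℝ) • (p' + p)))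
    (hp : p' = p - τ • G q q') :
    (1 / 2 : ℝ) * (p' ⬝ᵥ M⁻¹.mulVec p') + V q' =
    (1 / 2 : ℝ) * (p ⬝ᵥ M⁻¹.mulVec p) + V q :=
  hamiltonian_velocityDiscreteGradient_step
    (isHermitian_iff_isSymm.mp hM.isHermitian).inv hG hq hp
end

section
/- For the pairwise discrete gradient G one has ⟨G(q,q'), q'−q⟩ = ∑_{u=1}^N ⟨G_u(q,q'), q'_u − q_u⟩ = φ(r'_{ij}) − φ(r_{ij}) = V(q') − V(q), for all configurations q, q' with r'_{ij} ≠ r_{ij}. -/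
open scoped Matrix

/-- The Euclidean norm of a vector in `ℝ³`. -/
noncomputable def norm3 (v : Fin 3 → ℝ) : ℝ := Real.sqrt (∑ x, v x ^ 2)

/-- The pairwise (LaBudde–Greenspan) discrete gradient associated with the pair `i ≠ j`
and the pair potential `φ`, for the potential `V(q) = φ(‖q_j − q_i‖)`. -/
noncomputable def pairDG {N : ℕ} (i j : Fin N) (φ : ℝ → ℝ)
    (q q' : Fin N → Fin 3 → ℝ) : Fin N → Fin 3 → ℝ :=
  let r := norm3 (q j - q i)
  let r' := norm3 (q' j - q' i)
  let Δ := (φ r' - φ r) / (r' - r)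
  let w := (r' + r)⁻¹ • ((q' j - q' i) + (q j - q i))
  fun u => if u = i then -(Δ • w) else if u = j then Δ • w else 0

/-!
Only the components `i` and `j` of `G` are nonzero, and they are opposite, so the pairing
reduces to `Δ ⟨w, r⃗' − r⃗⟩` with `w = (r⃗' + r⃗)/(r' + r)`. Since
`⟨r⃗' + r⃗, r⃗' − r⃗⟩ = r'² − r² = (r' − r)(r' + r)`, the two denominators cancel and what remains
is the numerator `φ(r') − φ(r)` of `Δ`.
-/

lemma norm3_nonneg (v : Fin 3 → ℝ) : 0 ≤ norm3 v := Real.sqrt_nonneg _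

lemma norm3_sq (v : Fin 3 → ℝ) : norm3 v ^ 2 = v ⬝ᵥ v := by
  rw [norm3, Real.sq_sqrt (Finset.sum_nonneg fun x _ => sq_nonneg _)]
  simp [dotProduct, sq]

lemma add_dotProduct_sub {n R : Type*} [Fintype n] [CommRing R] (a b : n → R) :
    (a + b) ⬝ᵥ (a - b) = a ⬝ᵥ a - b ⬝ᵥ b := by
  simp only [add_dotProduct, dotProduct_sub, dotProduct_comm b a]
  ring

lemma sum_ite_neg_dotProduct {ι n R : Type*} [Fintype ι] [DecidableEq ι] [Fintype n]
    [CommRing R] {i j : ι} (hij : i ≠ j) (v : n → R) (d : ι → n → R) :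
    ∑ u, (if u = i then -v else if u = j then v else 0) ⬝ᵥ d u = v ⬝ᵥ (d j - d i) := by
  rw [Fintype.sum_eq_add i j hij fun u hu => by simp [hu.1, hu.2], if_pos rfl,
    if_neg hij.symm, if_pos rfl, neg_dotProduct, dotProduct_sub]
  ring

lemma div_sub_mul_inv_add_mul_sq_sub_sq {K : Type*} [Field K] (c : K) {x y : K}
    (hxy : x ≠ y) (hsum : x + y ≠ 0) :
    c / (x - y) * ((x + y)⁻¹ * (x ^ 2 - y ^ 2)) = c := by
  have hsub : x - y ≠ 0 := sub_ne_zero.mpr hxy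
  rw [show x ^ 2 - y ^ 2 = (x - y) * (x + y) by ring]
  field_simp

/-- Secant property of the pairwise discrete gradient:
`⟨G(q,q'), q'−q⟩ = φ(r'_{ij}) − φ(r_{ij}) = V(q') − V(q)`. -/
theorem pairDG_secant {N : ℕ} (i j : Fin N) (hij : i ≠ j) (φ : ℝ → ℝ)
    (q q' : Fin N → Fin 3 → ℝ)
    (hr : norm3 (q' j - q' i) ≠ norm3 (q j - q i)) :
    ∑ u, pairDG i j φ q q' u ⬝ᵥ (q' u - q u)
      = φ (norm3 (q' j - q' i)) - φ (norm3 (q j - q i)) := by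
  have hdiff : (q' j - q j) - (q' i - q i) = (q' j - q' i) - (q j - q i) := by abel
  set a := q' j - q' i
  set b := q j - q i
  have hsum : norm3 a + norm3 b ≠ 0 := fun h =>
    hr (by linarith [norm3_nonneg a, norm3_nonneg b])
  rw [pairDG, sum_ite_neg_dotProduct hij, hdiff, smul_dotProduct, smul_dotProduct,
    add_dotProduct_sub, ← norm3_sq, ← norm3_sq, smul_eq_mul, smul_eq_mul]
  exact div_sub_mul_inv_add_mul_sq_sub_sq _ hr hsum
end

section
/- For the pairwise discrete gradient G associated with the pair i ≠ j and pair potential φ, and any configurations q, q' with r'_{ij} ≠ r_{ij}, one has ∑_{u=1}^N (q'_u + q_u) × G_u(q,q') = 0, where × denotes the cross product in ℝ³. -/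
open scoped Matrix

section PairForce

variable {ι : Type*} [DecidableEq ι]

def pairForce (i j : ι) (v : Fin 3 → ℝ) : ι → Fin 3 → ℝ :=
  Pi.single j v - Pi.single i v

theorem pairForce_eq_ite {i j : ι} {v : Fin 3 → ℝ} (hv : i = j → v = 0) :
    pairForce i j v = fun u => if u = i then -v else if u = j then v else 0 := by
  funext u
  rw [pairForce, Pi.sub_apply]
  by_cases hui : u = i
  · subst hui
    by_cases hju : j = u
    · simp [hv hju.symm]
    · simp [Pi.single_eq_of_ne' hju]
  · by_cases huj : u = j
    · subst huj
      simp [hui]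
    · simp [hui, huj]

variable [Fintype ι]

theorem sum_cross_pi_single (a : ι → Fin 3 → ℝ) (j : ι) (x : Fin 3 → ℝ) :
    ∑ u, a u ⨯₃ (Pi.single j x : ι → Fin 3 → ℝ) u = a j ⨯₃ x :=
  (Fintype.sum_eq_single j fun u hu => by rw [Pi.single_eq_of_ne hu, map_zero]).trans
    (by rw [Pi.single_eq_same])

theorem sum_cross_pairForce_smul_sub (a : ι → Fin 3 → ℝ) (i j : ι) (c : ℝ) :
    ∑ u, a u ⨯₃ pairForce i j (c • (a j - a i)) u = 0 := by
  simp only [pairForce, Pi.sub_apply, map_sub, Finset.sum_sub_distrib, sum_cross_pi_single]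
  rw [← LinearMap.sub_apply, ← map_sub, map_smul, cross_self, smul_zero]

end PairForce

theorem exists_pairDG_eq_pairForce {N : ℕ} (i j : Fin N) (φ : ℝ → ℝ)
    (q q' : Fin N → Fin 3 → ℝ) :
    ∃ c : ℝ, pairDG i j φ q q' = pairForce i j (c • ((q' + q) j - (q' + q) i)) := by
  set r := norm3 (q j - q i)
  set r' := norm3 (q' j - q' i)
  set Δ := (φ r' - φ r) / (r' - r)
  have hΔ : Δ • (r' + r)⁻¹ • ((q' j - q' i) + (q j - q i)) =
      (Δ * (r' + r)⁻¹) • ((q' + q) j - (q' + q) i) := by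
    rw [smul_smul, ← add_sub_add_comm]
    rfl
  refine ⟨Δ * (r' + r)⁻¹, ?_⟩
  rw [pairForce_eq_ite fun hij => by subst hij; simp, ← hΔ]
  rfl

theorem pairDG_cross_sum_eq_zero_general {N : ℕ} (i j : Fin N) (φ : ℝ → ℝ)
    (q q' : Fin N → Fin 3 → ℝ) :
    ∑ u, (q' u + q u) ⨯₃ pairDG i j φ q q' u = 0 := by
  obtain ⟨c, hG⟩ := exists_pairDG_eq_pairForce i j φ q q'
  rw [hG]
  exact sum_cross_pairForce_smul_sub (q' + q) i j c

/-- For the pairwise discrete gradient `G` one has `∑ u, (q'_u + q_u) × G_u(q,q') = 0`. -/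
theorem pairDG_cross_sum_eq_zero {N : ℕ} (i j : Fin N) (hij : i ≠ j) (φ : ℝ → ℝ)
    (q q' : Fin N → Fin 3 → ℝ)
    (hr : norm3 (q' j - q' i) ≠ norm3 (q j - q i)) :
    ∑ u, (q' u + q u) ⨯₃ pairDG i j φ q q' u = 0 :=
  pairDG_cross_sum_eq_zero_general i j φ q q'
end

section
/- Let m_1,…,m_N > 0 and let G = ∑_{k=1}^M G^k be a sum of pairwise discrete gradients (each G^k associated with a pair (i_k, j_k) and pair potential φ_k, and each well-defined at (q, q⁺), i.e. the primed and unprimed distances of every involved pair differ). If q⁺_u = q_u + (τ/(2 m_u))(p⁺_u + p_u) and p⁺_u = p_u − τ G_u(q, q⁺) for u = 1,…,N, then the total angular momentum is preserved: ∑_{u=1}^N q⁺_u × p⁺_u = ∑_{u=1}^N q_u × p_u, where × is the cross product in ℝ³. -/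
open scoped Matrix

/-!
By bilinearity of the cross product,
`2 (q'_u × p'_u − q_u × p_u) = (q'_u + q_u) × (p'_u − p_u) + (q'_u − q_u) × (p'_u + p_u)`.
The position update makes `q'_u − q_u` parallel to `p'_u + p_u`, so the second term vanishes,
and the momentum update turns the first into `−τ (q'_u + q_u) × G_u`. A pairwise discrete
gradient acts on particles `i` and `j` by `∓ Δ w` with `w` parallel to
`(q'_j + q_j) − (q'_i + q_i)`, so its contributions to `∑_u (q'_u + q_u) × G_u` cancel.
-/

section CrossProduct

variable {R : Type*} [CommRing R]

theorem two_smul_cross_sub_cross (a a' b b' : Fin 3 → R) :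
    (2 : R) • (a' ⨯₃ b' - a ⨯₃ b) = (a' + a) ⨯₃ (b' - b) + (a' - a) ⨯₃ (b' + b) := by
  simp only [map_add, map_sub, LinearMap.add_apply, LinearMap.sub_apply]
  module

theorem two_smul_cross_sub_cross_of_step {a a' b b' g : Fin 3 → R} {c τ : R}
    (ha : a' = a + c • (b' + b)) (hb : b' = b - τ • g) :
    (2 : R) • (a' ⨯₃ b' - a ⨯₃ b) = -τ • ((a' + a) ⨯₃ g) := by
  have hparallel : (a' - a) ⨯₃ (b' + b) = 0 := by
    rw [ha, add_sub_cancel_left, map_smul, LinearMap.smul_apply, cross_self, smul_zero]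
  rw [two_smul_cross_sub_cross, hparallel, add_zero, hb, sub_sub_cancel_left, neg_smul, map_neg,
    map_smul]

theorem sum_cross_pair {ι : Type*} [Fintype ι] [DecidableEq ι] {i j : ι} (hij : i ≠ j)
    (x : ι → Fin 3 → R) (g : Fin 3 → R) :
    ∑ u, x u ⨯₃ (if u = i then -g else if u = j then g else 0) = (x j - x i) ⨯₃ g := by
  rw [Finset.sum_eq_add_of_mem i j (Finset.mem_univ _) (Finset.mem_univ _) hij
    fun u _ hu => by simp [hu.1, hu.2]]
  simp [hij.symm, sub_eq_neg_add]

end CrossProduct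

theorem sum_cross_pairDG_eq_zero {N : ℕ} {i j : Fin N} (hij : i ≠ j) (φ : ℝ → ℝ)
    (q q' : Fin N → Fin 3 → ℝ) :
    ∑ u, (q' u + q u) ⨯₃ pairDG i j φ q q' u = 0 := by
  rw [pairDG, sum_cross_pair hij]
  have hw : (q' j + q j) - (q' i + q i) = (q' j - q' i) + (q j - q i) := by abel
  simp only [hw, map_smul, cross_self, smul_zero]

theorem pairDG_preserves_angular_momentum_general {N M : ℕ}
    (m : Fin N → ℝ)
    (i j : Fin M → Fin N) (φ : Fin M → ℝ → ℝ)
    (hij : ∀ k, i k ≠ j k)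
    (q q' : Fin N → Fin 3 → ℝ)
    (G : Fin N → Fin 3 → ℝ)
    (hG : G = ∑ k, pairDG (i k) (j k) (φ k) q q')
    (τ : ℝ) (p p' : Fin N → Fin 3 → ℝ)
    (hq : ∀ u, q' u = q u + (τ / (2 * m u)) • (p' u + p u))
    (hp : ∀ u, p' u = p u - τ • G u) :
    ∑ u, q' u ⨯₃ p' u = ∑ u, q u ⨯₃ p u := by
  have htorque : ∑ u, (q' u + q u) ⨯₃ G u = 0 := by
    simp only [hG, Finset.sum_apply, map_sum]
    rw [Finset.sum_comm]
    exact Finset.sum_eq_zero fun k _ => sum_cross_pairDG_eq_zero (hij k) (φ k) q q'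
  have htwice : (2 : ℝ) • (∑ u, q' u ⨯₃ p' u - ∑ u, q u ⨯₃ p u) = 0 := by
    rw [← Finset.sum_sub_distrib, Finset.smul_sum,
      Finset.sum_congr rfl fun u _ => two_smul_cross_sub_cross_of_step (hq u) (hp u),
      ← Finset.smul_sum, htorque, smul_zero]
  exact sub_eq_zero.mp ((smul_eq_zero.mp htwice).resolve_left two_ne_zero)

/-- One step of the velocity discrete gradient method with a sum of pairwise discrete
gradients preserves the total angular momentum `∑ u, q_u × p_u`. -/
theorem pairDG_preserves_angular_momentum {N M : ℕ}
    (m : Fin N → ℝ) (hm : ∀ u, 0 < m u)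
    (i j : Fin M → Fin N) (φ : Fin M → ℝ → ℝ)
    (hij : ∀ k, i k ≠ j k)
    (q q' : Fin N → Fin 3 → ℝ)
    (hr : ∀ k, norm3 (q' (j k) - q' (i k)) ≠ norm3 (q (j k) - q (i k)))
    (G : Fin N → Fin 3 → ℝ)
    (hG : G = ∑ k, pairDG (i k) (j k) (φ k) q q')
    (τ : ℝ) (p p' : Fin N → Fin 3 → ℝ)
    (hq : ∀ u, q' u = q u + (τ / (2 * m u)) • (p' u + p u))
    (hp : ∀ u, p' u = p u - τ • G u) :
    ∑ u, q' u ⨯₃ p' u = ∑ u, q u ⨯₃ p u :=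
  pairDG_preserves_angular_momentum_general m i j φ hij q q' G hG τ p p' hq hp
end

section
/- Let q_i, q_j, q_k, q_ℓ ∈ ℝ³, set m⃗ = r⃗_{ij} × r⃗_{jk} and n⃗ = r⃗_{jk} × r⃗_{kℓ}, and assume m⃗ ≠ 0 and n⃗ ≠ 0. Then the cosine of the dihedral angle admits the representation in distances ⟨m⃗, n⃗⟩ / (‖m⃗‖ ‖n⃗‖) = [ (r_{kℓ}² + r_{jk}² − r_{jℓ}²)(r_{ij}² + r_{jk}² − r_{ik}²) − 2 r_{jk}² (r_{jk}² + r_{iℓ}² − r_{jℓ}² − r_{ik}²) ] / [ √(4 r_{jk}² r_{ij}² − (r_{ij}² + r_{jk}² − r_{ik}²)²) · √(4 r_{jk}² r_{kℓ}² − (r_{jk}² + r_{kℓ}² − r_{jℓ}²)²) ]. -/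
/-!
Write `a = r⃗_{ij}`, `b = r⃗_{jk}`, `d = r⃗_{kℓ}`. The Binet–Cauchy identity
`⟨a × b, b × d⟩ = ⟨a, b⟩⟨b, d⟩ - ⟨a, d⟩‖b‖²` and Lagrange's identity
`‖a × b‖² = ‖a‖²‖b‖² - ⟨a, b⟩²` express `⟨m⃗, n⃗⟩`, `‖m⃗‖²`, `‖n⃗‖²` through inner products of
difference vectors, and polarization turns those into squared distances. The numerator becomes
`4⟨m⃗, n⃗⟩` and the radicands become `(2‖m⃗‖)²` and `(2‖n⃗‖)²`, i.e. `16` times the squared areas of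
the triangles `ijk` and `jkℓ` (Heron's formula).
-/

open scoped Matrix

lemma norm3_pos {v : Fin 3 → ℝ} (hv : v ≠ 0) : 0 < norm3 v := by
  obtain ⟨i, hi⟩ := Function.ne_iff.mp hv
  exact Real.sqrt_pos.mpr <| Finset.sum_pos' (fun j _ => sq_nonneg (v j))
    ⟨i, Finset.mem_univ i, sq_pos_of_ne_zero hi⟩

lemma norm3_cross_sq (u v : Fin 3 → ℝ) :
    norm3 (u ⨯₃ v) ^ 2 = norm3 u ^ 2 * norm3 v ^ 2 - (u ⬝ᵥ v) ^ 2 := by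
  rw [norm3_sq, norm3_sq, norm3_sq, cross_dot_cross, dotProduct_comm v u]
  ring

lemma two_mul_dotProduct_sub_sub_sub (p q r s : Fin 3 → ℝ) :
    2 * ((q - p) ⬝ᵥ (s - r)) =
      norm3 (s - p) ^ 2 + norm3 (r - q) ^ 2 - norm3 (r - p) ^ 2 - norm3 (s - q) ^ 2 := by
  simp only [norm3_sq, dotProduct, Fin.sum_univ_three, Pi.sub_apply]
  ring

lemma two_mul_dotProduct_sub_sub (p q r : Fin 3 → ℝ) :
    2 * ((q - p) ⬝ᵥ (r - q)) = norm3 (r - p) ^ 2 - norm3 (q - p) ^ 2 - norm3 (r - q) ^ 2 := by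
  simpa [norm3] using two_mul_dotProduct_sub_sub_sub p q q r

lemma sqrt_heron_eq_two_mul_norm3_cross (p q r : Fin 3 → ℝ) :
    Real.sqrt (4 * norm3 (q - p) ^ 2 * norm3 (r - q) ^ 2 -
        (norm3 (q - p) ^ 2 + norm3 (r - q) ^ 2 - norm3 (r - p) ^ 2) ^ 2) =
      2 * norm3 ((q - p) ⨯₃ (r - q)) := by
  have hsq : 4 * norm3 (q - p) ^ 2 * norm3 (r - q) ^ 2 -
      (norm3 (q - p) ^ 2 + norm3 (r - q) ^ 2 - norm3 (r - p) ^ 2) ^ 2 =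
        (2 * norm3 ((q - p) ⨯₃ (r - q))) ^ 2 := by
    rw [mul_pow, norm3_cross_sq]
    linear_combination (2 * ((q - p) ⬝ᵥ (r - q)) - norm3 (q - p) ^ 2 - norm3 (r - q) ^ 2 +
      norm3 (r - p) ^ 2) * two_mul_dotProduct_sub_sub p q r
  rw [hsq, Real.sqrt_sq (by rw [norm3]; positivity)]

lemma four_mul_cross_dot_cross_eq_dist (p q r s : Fin 3 → ℝ) :
    (norm3 (s - r) ^ 2 + norm3 (r - q) ^ 2 - norm3 (s - q) ^ 2) *
          (norm3 (q - p) ^ 2 + norm3 (r - q) ^ 2 - norm3 (r - p) ^ 2)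
        - 2 * norm3 (r - q) ^ 2 *
          (norm3 (r - q) ^ 2 + norm3 (s - p) ^ 2 - norm3 (s - q) ^ 2 - norm3 (r - p) ^ 2) =
      4 * (((q - p) ⨯₃ (r - q)) ⬝ᵥ ((r - q) ⨯₃ (s - r))) := by
  have hpqr := two_mul_dotProduct_sub_sub p q r
  have hqrs := two_mul_dotProduct_sub_sub q r s
  have hpqrs := two_mul_dotProduct_sub_sub_sub p q r s
  rw [cross_dot_cross, ← norm3_sq]
  linear_combination
    (norm3 (q - p) ^ 2 + norm3 (r - q) ^ 2 - norm3 (r - p) ^ 2) * hqrs -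
      2 * ((r - q) ⬝ᵥ (s - r)) * hpqr + 2 * norm3 (r - q) ^ 2 * hpqrs

/-- The cosine of the dihedral angle, `⟨m⃗,n⃗⟩/(‖m⃗‖‖n⃗‖)` with `m⃗ = r⃗_{ij} × r⃗_{jk}` and
`n⃗ = r⃗_{jk} × r⃗_{kℓ}`, expressed purely in terms of the six distances between the four
points. -/
theorem dihedral_cos_eq_distances (qi qj qk ql : Fin 3 → ℝ)
    (hm : (qj - qi) ⨯₃ (qk - qj) ≠ 0)
    (hn : (qk - qj) ⨯₃ (ql - qk) ≠ 0) :
    ((qj - qi) ⨯₃ (qk - qj)) ⬝ᵥ ((qk - qj) ⨯₃ (ql - qk)) /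
        (norm3 ((qj - qi) ⨯₃ (qk - qj)) * norm3 ((qk - qj) ⨯₃ (ql - qk)))
      = ((norm3 (ql - qk) ^ 2 + norm3 (qk - qj) ^ 2 - norm3 (ql - qj) ^ 2) *
            (norm3 (qj - qi) ^ 2 + norm3 (qk - qj) ^ 2 - norm3 (qk - qi) ^ 2)
          - 2 * norm3 (qk - qj) ^ 2 *
            (norm3 (qk - qj) ^ 2 + norm3 (ql - qi) ^ 2 - norm3 (ql - qj) ^ 2
              - norm3 (qk - qi) ^ 2)) /
        (Real.sqrt (4 * norm3 (qk - qj) ^ 2 * norm3 (qj - qi) ^ 2 -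
            (norm3 (qj - qi) ^ 2 + norm3 (qk - qj) ^ 2 - norm3 (qk - qi) ^ 2) ^ 2) *
         Real.sqrt (4 * norm3 (qk - qj) ^ 2 * norm3 (ql - qk) ^ 2 -
            (norm3 (qk - qj) ^ 2 + norm3 (ql - qk) ^ 2 - norm3 (ql - qj) ^ 2) ^ 2)) := by
  rw [four_mul_cross_dot_cross_eq_dist, mul_right_comm 4 (norm3 (qk - qj) ^ 2),
    sqrt_heron_eq_two_mul_norm3_cross, sqrt_heron_eq_two_mul_norm3_cross]
  have hm' := (norm3_pos hm).ne'
  have hn' := (norm3_pos hn).ne'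
  field_simp
  ring
end

section
/- For the dihedral discrete gradient G (the coordinate-increment construction ∇̄^ℓ in the six distances r_{ij}, r_{jk}, r_{kℓ}, r_{ik}, r_{jℓ}, r_{iℓ}), one has ⟨G(q,q'), q'−q⟩ = ∑_{u=1}^N ⟨G_u(q,q'), q'_u − q_u⟩ = W(r'_{ij}, r'_{jk}, r'_{kℓ}, r'_{ik}, r'_{jℓ}, r'_{iℓ}) − W(r_{ij}, r_{jk}, r_{kℓ}, r_{ik}, r_{jℓ}, r_{iℓ}) = V(q') − V(q), for all configurations q, q' such that each of the six primed distances differs from its unprimed counterpart. -/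
open scoped Matrix

/-- The dihedral discrete gradient (coordinate-increment construction `∇̄^ℓ` in the six
distances `r_{ij}, r_{jk}, r_{kℓ}, r_{ik}, r_{jℓ}, r_{iℓ}`, in this order) associated with
the quadruple `i, j, k, l` and the potential `W`, for the dihedral potential
`V(q) = W(r_{ij}, r_{jk}, r_{kℓ}, r_{ik}, r_{jℓ}, r_{iℓ})`. -/
noncomputable def dihedralDG {N : ℕ} (i j k l : Fin N)
    (W : ℝ → ℝ → ℝ → ℝ → ℝ → ℝ → ℝ)
    (q q' : Fin N → Fin 3 → ℝ) : Fin N → Fin 3 → ℝ :=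
  let rij := norm3 (q j - q i); let rjk := norm3 (q k - q j); let rkl := norm3 (q l - q k)
  let rik := norm3 (q k - q i); let rjl := norm3 (q l - q j); let ril := norm3 (q l - q i)
  let rij' := norm3 (q' j - q' i); let rjk' := norm3 (q' k - q' j)
  let rkl' := norm3 (q' l - q' k); let rik' := norm3 (q' k - q' i)
  let rjl' := norm3 (q' l - q' j); let ril' := norm3 (q' l - q' i)
  let Dij := (W rij' rjk rkl rik rjl ril - W rij rjk rkl rik rjl ril) / (rij' - rij)
  let Djk := (W rij' rjk' rkl rik rjl ril - W rij' rjk rkl rik rjl ril) / (rjk' - rjk)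
  let Dkl := (W rij' rjk' rkl' rik rjl ril - W rij' rjk' rkl rik rjl ril) / (rkl' - rkl)
  let Dik := (W rij' rjk' rkl' rik' rjl ril - W rij' rjk' rkl' rik rjl ril) / (rik' - rik)
  let Djl := (W rij' rjk' rkl' rik' rjl' ril - W rij' rjk' rkl' rik' rjl ril) / (rjl' - rjl)
  let Dil := (W rij' rjk' rkl' rik' rjl' ril' - W rij' rjk' rkl' rik' rjl' ril) / (ril' - ril)
  let uij := (rij' + rij)⁻¹ • ((q' j - q' i) + (q j - q i))
  let ujk := (rjk' + rjk)⁻¹ • ((q' k - q' j) + (q k - q j))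
  let ukl := (rkl' + rkl)⁻¹ • ((q' l - q' k) + (q l - q k))
  let uik := (rik' + rik)⁻¹ • ((q' k - q' i) + (q k - q i))
  let ujl := (rjl' + rjl)⁻¹ • ((q' l - q' j) + (q l - q j))
  let uil := (ril' + ril)⁻¹ • ((q' l - q' i) + (q l - q i))
  fun u =>
    if u = i then -(Dij • uij) - Dik • uik - Dil • uil
    else if u = j then Dij • uij - Djk • ujk - Djl • ujl
    else if u = k then Dik • uik + Djk • ujk - Dkl • ukl
    else if u = l then Dil • uil + Djl • ujl + Dkl • ukl
    else 0

lemma inv_add_smul_add_dotProduct_sub (a b : Fin 3 → ℝ) :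
    ((norm3 b + norm3 a)⁻¹ • (b + a)) ⬝ᵥ (b - a) = norm3 b - norm3 a := by
  have ha : 0 ≤ norm3 a := Real.sqrt_nonneg _
  have hb : 0 ≤ norm3 b := Real.sqrt_nonneg _
  rw [smul_dotProduct, add_dotProduct_sub, ← norm3_sq, ← norm3_sq, smul_eq_mul]
  rcases (add_nonneg hb ha).eq_or_lt with hsum | hsum
  · rw [← hsum, inv_zero, zero_mul]
    linarith
  · field_simp
    ring

lemma coordIncrement_smul_dotProduct {a b : Fin 3 → ℝ} (h : norm3 b ≠ norm3 a) (X Y : ℝ) :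
    (((X - Y) / (norm3 b - norm3 a)) • ((norm3 b + norm3 a)⁻¹ • (b + a))) ⬝ᵥ (b - a)
      = X - Y := by
  rw [smul_dotProduct, inv_add_smul_add_dotProduct_sub, smul_eq_mul,
    div_mul_cancel₀ _ (sub_ne_zero.2 h)]

lemma ne_of_norm3_sub_ne {N : ℕ} {q q' : Fin N → Fin 3 → ℝ} {a b : Fin N}
    (h : norm3 (q' b - q' a) ≠ norm3 (q b - q a)) : a ≠ b := by
  rintro rfl
  simp only [sub_self] at h
  exact h rfl

/-- `∑ᵤ ⟨Bᵀe, v⟩ᵤ = ⟨e, Bv⟩` for the incidence matrix `B` of the complete graph on `i, j, k, l`. -/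
lemma sum_tetrahedron_incidence_dotProduct {ι n R : Type*} [Fintype ι] [DecidableEq ι]
    [Fintype n] [CommRing R] {i j k l : ι} (hij : i ≠ j) (hik : i ≠ k) (hil : i ≠ l)
    (hjk : j ≠ k) (hjl : j ≠ l) (hkl : k ≠ l) (eij ejk ekl eik ejl eil : n → R)
    (v : ι → n → R) :
    ∑ u, (if u = i then -eij - eik - eil
      else if u = j then eij - ejk - ejl
      else if u = k then eik + ejk - ekl
      else if u = l then eil + ejl + ekl
      else 0) ⬝ᵥ v u
      = eij ⬝ᵥ (v j - v i) + ejk ⬝ᵥ (v k - v j) + ekl ⬝ᵥ (v l - v k)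
        + eik ⬝ᵥ (v k - v i) + ejl ⬝ᵥ (v l - v j) + eil ⬝ᵥ (v l - v i) := by
  rw [← Finset.sum_subset (Finset.subset_univ {i, j, k, l}) fun u _ hu => by
    simp only [Finset.mem_insert, Finset.mem_singleton, not_or] at hu
    simp [hu.1, hu.2.1, hu.2.2.1, hu.2.2.2]]
  rw [Finset.sum_insert (by simp [hij, hik, hil]), Finset.sum_insert (by simp [hjk, hjl]),
    Finset.sum_insert (by simp [hkl]), Finset.sum_singleton]
  simp only [if_true, if_neg hij.symm, if_neg hik.symm, if_neg hil.symm, if_neg hjk.symm,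
    if_neg hjl.symm, if_neg hkl.symm, add_dotProduct, sub_dotProduct, neg_dotProduct,
    dotProduct_sub]
  ring

theorem dihedralDG_secant_general {N : ℕ} (i j k l : Fin N)
    (W : ℝ → ℝ → ℝ → ℝ → ℝ → ℝ → ℝ) (q q' : Fin N → Fin 3 → ℝ)
    (h1 : norm3 (q' j - q' i) ≠ norm3 (q j - q i))
    (h2 : norm3 (q' k - q' j) ≠ norm3 (q k - q j))
    (h3 : norm3 (q' l - q' k) ≠ norm3 (q l - q k))
    (h4 : norm3 (q' k - q' i) ≠ norm3 (q k - q i))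
    (h5 : norm3 (q' l - q' j) ≠ norm3 (q l - q j))
    (h6 : norm3 (q' l - q' i) ≠ norm3 (q l - q i)) :
    ∑ u, dihedralDG i j k l W q q' u ⬝ᵥ (q' u - q u)
      = W (norm3 (q' j - q' i)) (norm3 (q' k - q' j)) (norm3 (q' l - q' k))
          (norm3 (q' k - q' i)) (norm3 (q' l - q' j)) (norm3 (q' l - q' i))
        - W (norm3 (q j - q i)) (norm3 (q k - q j)) (norm3 (q l - q k))
          (norm3 (q k - q i)) (norm3 (q l - q j)) (norm3 (q l - q i)) := by
  simp only [dihedralDG]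
  rw [sum_tetrahedron_incidence_dotProduct
    (ne_of_norm3_sub_ne h1) (ne_of_norm3_sub_ne h4) (ne_of_norm3_sub_ne h6)
    (ne_of_norm3_sub_ne h2) (ne_of_norm3_sub_ne h5) (ne_of_norm3_sub_ne h3)]
  simp only [sub_sub_sub_comm (q' _) (q _)]
  rw [coordIncrement_smul_dotProduct h1, coordIncrement_smul_dotProduct h2,
    coordIncrement_smul_dotProduct h3, coordIncrement_smul_dotProduct h4,
    coordIncrement_smul_dotProduct h5, coordIncrement_smul_dotProduct h6]
  ring

/-- Secant property of the dihedral discrete gradient: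
`⟨G(q,q'), q'−q⟩ = W(primed distances) − W(unprimed distances) = V(q') − V(q)`. -/
theorem dihedralDG_secant {N : ℕ} (i j k l : Fin N)
    (hij : i ≠ j) (hik : i ≠ k) (hil : i ≠ l)
    (hjk : j ≠ k) (hjl : j ≠ l) (hkl : k ≠ l)
    (W : ℝ → ℝ → ℝ → ℝ → ℝ → ℝ → ℝ) (q q' : Fin N → Fin 3 → ℝ)
    (h1 : norm3 (q' j - q' i) ≠ norm3 (q j - q i))
    (h2 : norm3 (q' k - q' j) ≠ norm3 (q k - q j))
    (h3 : norm3 (q' l - q' k) ≠ norm3 (q l - q k))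
    (h4 : norm3 (q' k - q' i) ≠ norm3 (q k - q i))
    (h5 : norm3 (q' l - q' j) ≠ norm3 (q l - q j))
    (h6 : norm3 (q' l - q' i) ≠ norm3 (q l - q i)) :
    ∑ u, dihedralDG i j k l W q q' u ⬝ᵥ (q' u - q u)
      = W (norm3 (q' j - q' i)) (norm3 (q' k - q' j)) (norm3 (q' l - q' k))
          (norm3 (q' k - q' i)) (norm3 (q' l - q' j)) (norm3 (q' l - q' i))
        - W (norm3 (q j - q i)) (norm3 (q k - q j)) (norm3 (q l - q k))
          (norm3 (q k - q i)) (norm3 (q l - q j)) (norm3 (q l - q i)) :=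
  dihedralDG_secant_general i j k l W q q' h1 h2 h3 h4 h5 h6
end

section
/- Let m_1,…,m_N > 0 and let G = ∑_{k=1}^M G^k, where each G^k is either a pairwise, an angle, or a dihedral discrete gradient (associated with its index pair, triple, or quadruple and its potential function, and well-defined at (q, q⁺), i.e. every distance appearing in its finite differences changes between q and q⁺). Let V = ∑_{k=1}^M V^k be the corresponding total potential and H(q,p) = ∑_{u=1}^N ‖p_u‖²/(2 m_u) + V(q). If q⁺_u = q_u + (τ/(2 m_u))(p⁺_u + p_u) and p⁺_u = p_u − τ G_u(q, q⁺) for u = 1,…,N, then the step preserves the energy, the total linear momentum, and the total angular momentum: H(q⁺, p⁺) = H(q, p), ∑_{u=1}^N p⁺_u = ∑_{u=1}^N p_u, and ∑_{u=1}^N q⁺_u × p⁺_u = ∑_{u=1}^N q_u × p_u. -/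
open scoped Matrix

/-- The angle discrete gradient (coordinate-increment construction `∇̄^ℓ` in the three
distances `r_{ji}, r_{jk}, r_{ik}`) associated with the triple `i, j, k` and the
potential `ψ`, for the angle potential `V(q) = ψ(r_{ji}, r_{jk}, r_{ik})`. -/
noncomputable def angleDG {N : ℕ} (i j k : Fin N) (ψ : ℝ → ℝ → ℝ → ℝ)
    (q q' : Fin N → Fin 3 → ℝ) : Fin N → Fin 3 → ℝ :=
  let rji := norm3 (q i - q j); let rjk := norm3 (q k - q j); let rik := norm3 (q k - q i)
  let rji' := norm3 (q' i - q' j); let rjk' := norm3 (q' k - q' j)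
  let rik' := norm3 (q' k - q' i)
  let Dji := (ψ rji' rjk rik - ψ rji rjk rik) / (rji' - rji)
  let Djk := (ψ rji' rjk' rik - ψ rji' rjk rik) / (rjk' - rjk)
  let Dik := (ψ rji' rjk' rik' - ψ rji' rjk' rik) / (rik' - rik)
  let uji := (rji' + rji)⁻¹ • ((q' i - q' j) + (q i - q j))
  let ujk := (rjk' + rjk)⁻¹ • ((q' k - q' j) + (q k - q j))
  let uik := (rik' + rik)⁻¹ • ((q' k - q' i) + (q k - q i))
  fun u =>
    if u = i then Dji • uji - Dik • uik
    else if u = j then -(Dji • uji) - Djk • ujk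
    else if u = k then Djk • ujk + Dik • uik
    else 0

lemma add_dotProduct_sub_self (a b : Fin 3 → ℝ) :
    (a + b) ⬝ᵥ (a - b) = norm3 a ^ 2 - norm3 b ^ 2 := by
  rw [norm3_sq, norm3_sq, add_dotProduct, dotProduct_sub, dotProduct_sub, dotProduct_comm b a]
  ring

lemma Fintype.sum_apply_single {ι β M : Type*} [Fintype ι] [DecidableEq ι] [Zero β]
    [AddCommMonoid M] (f : ι → β → M) (hf : ∀ u, f u 0 = 0) (b : ι) (g : β) :
    ∑ u, f u ((Pi.single b g : ι → β) u) = f b g :=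
  (Fintype.sum_eq_single b fun u hu => by rw [Pi.single_eq_of_ne hu, hf]).trans (by simp)

section InvariantDG

variable {ι : Type*} [Fintype ι] (q q' : ι → Fin 3 → ℝ)

structure IsInvariantDG (F : ι → Fin 3 → ℝ) (δ : ℝ) : Prop where
  work_eq : ∑ u, F u ⬝ᵥ (q' u - q u) = δ
  sum_eq_zero : ∑ u, F u = 0
  torque_eq_zero : ∑ u, (q' u + q u) ⨯₃ F u = 0

variable {q q'}

lemma IsInvariantDG.zero : IsInvariantDG q q' 0 0 := ⟨by simp, by simp, by simp⟩

lemma IsInvariantDG.add {F F' : ι → Fin 3 → ℝ} {δ δ' : ℝ} (h : IsInvariantDG q q' F δ)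
    (h' : IsInvariantDG q q' F' δ') : IsInvariantDG q q' (F + F') (δ + δ') where
  work_eq := by
    simp only [Pi.add_apply, add_dotProduct, Finset.sum_add_distrib, h.work_eq, h'.work_eq]
  sum_eq_zero := by
    simp only [Pi.add_apply, Finset.sum_add_distrib, h.sum_eq_zero, h'.sum_eq_zero, add_zero]
  torque_eq_zero := by
    simp only [Pi.add_apply, (crossProduct _).map_add, Finset.sum_add_distrib, h.torque_eq_zero,
      h'.torque_eq_zero, add_zero]

lemma IsInvariantDG.sum {κ : Type*} (s : Finset κ) {F : κ → ι → Fin 3 → ℝ} {δ : κ → ℝ}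
    (h : ∀ c ∈ s, IsInvariantDG q q' (F c) (δ c)) :
    IsInvariantDG q q' (∑ c ∈ s, F c) (∑ c ∈ s, δ c) := by
  induction s using Finset.cons_induction with
  | empty => simpa using IsInvariantDG.zero
  | cons c s hc ih =>
    rw [Finset.sum_cons, Finset.sum_cons]
    exact (h c (Finset.mem_cons_self c s)).add (ih fun c' hc' => h c' (Finset.mem_cons_of_mem hc'))

variable [DecidableEq ι]

lemma isInvariantDG_centralForce (a b : ι) (c : ℝ) :
    let g := c • ((q' b - q' a) + (q b - q a))
    IsInvariantDG q q' (Pi.single b g - Pi.single a g) (g ⬝ᵥ ((q' b - q' a) - (q b - q a))) := by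
  intro g
  refine ⟨?_, by simp, ?_⟩
  · simp only [Pi.sub_apply, sub_dotProduct, Finset.sum_sub_distrib]
    rw [Fintype.sum_apply_single (fun u v => v ⬝ᵥ (q' u - q u)) (fun u => zero_dotProduct _),
      Fintype.sum_apply_single (fun u v => v ⬝ᵥ (q' u - q u)) (fun u => zero_dotProduct _)]
    simp only [dotProduct_sub]
    ring
  · simp only [Pi.sub_apply, map_sub, Finset.sum_sub_distrib]
    rw [Fintype.sum_apply_single (fun u v => (q' u + q u) ⨯₃ v) (fun u => map_zero _),
      Fintype.sum_apply_single (fun u v => (q' u + q u) ⨯₃ v) (fun u => map_zero _),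
      ← LinearMap.sub_apply, ← map_sub,
      show q' b + q b - (q' a + q a) = q' b - q' a + (q b - q a) by abel, map_smul, cross_self,
      smul_zero]

end InvariantDG

section PairDecomposition

variable {N : ℕ} {q q' : Fin N → Fin 3 → ℝ}

lemma isInvariantDG_pairDG {i j : Fin N} (hij : i ≠ j) (φ : ℝ → ℝ)
    (hr : norm3 (q' j - q' i) ≠ norm3 (q j - q i)) :
    IsInvariantDG q q' (pairDG i j φ q q') (φ (norm3 (q' j - q' i)) - φ (norm3 (q j - q i))) := by
  have hr₀ := norm3_nonneg (q j - q i)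
  have hr₀' := norm3_nonneg (q' j - q' i)
  convert isInvariantDG_centralForce (q := q) (q' := q') i j
    ((φ (norm3 (q' j - q' i)) - φ (norm3 (q j - q i))) /
      (norm3 (q' j - q' i) - norm3 (q j - q i)) * (norm3 (q' j - q' i) + norm3 (q j - q i))⁻¹)
    using 1
  · funext u
    rcases eq_or_ne u i with rfl | hi
    · simp [pairDG, hij, smul_smul]
    · rcases eq_or_ne u j with rfl | hj
      · simp [pairDG, hi, smul_smul]
      · simp [pairDG, hi, hj]
  · rw [smul_dotProduct, add_dotProduct_sub_self, smul_eq_mul]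
    generalize norm3 (q j - q i) = r at *
    generalize norm3 (q' j - q' i) = r' at *
    have hsum : r' + r ≠ 0 := by contrapose! hr; linarith
    rw [show r' ^ 2 - r ^ 2 = (r' - r) * (r' + r) by ring]
    field_simp [sub_ne_zero.mpr hr]

lemma angleDG_eq_sum_pairDG {i j k : Fin N} (hij : i ≠ j) (hik : i ≠ k) (hjk : j ≠ k)
    (ψ : ℝ → ℝ → ℝ → ℝ) :
    angleDG i j k ψ q q' =
      pairDG j i (fun r => ψ r (norm3 (q k - q j)) (norm3 (q k - q i))) q q'
      + pairDG j k (fun r => ψ (norm3 (q' i - q' j)) r (norm3 (q k - q i))) q q'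
      + pairDG i k (fun r => ψ (norm3 (q' i - q' j)) (norm3 (q' k - q' j)) r) q q' := by
  funext u
  rcases eq_or_ne u i with rfl | hi
  · simp [angleDG, pairDG, hij, hik]; abel
  rcases eq_or_ne u j with rfl | hj
  · simp [angleDG, pairDG, hi, hjk]; abel
  rcases eq_or_ne u k with rfl | hk
  · simp [angleDG, pairDG, hi, hj]
  · simp [angleDG, pairDG, hi, hj, hk]

lemma dihedralDG_eq_sum_pairDG {i j k l : Fin N} (hij : i ≠ j) (hik : i ≠ k) (hil : i ≠ l)
    (hjk : j ≠ k) (hjl : j ≠ l) (hkl : k ≠ l) (W : ℝ → ℝ → ℝ → ℝ → ℝ → ℝ → ℝ) :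
    dihedralDG i j k l W q q' =
      pairDG i j (fun r => W r (norm3 (q k - q j)) (norm3 (q l - q k))
          (norm3 (q k - q i)) (norm3 (q l - q j)) (norm3 (q l - q i))) q q'
      + pairDG j k (fun r => W (norm3 (q' j - q' i)) r (norm3 (q l - q k))
          (norm3 (q k - q i)) (norm3 (q l - q j)) (norm3 (q l - q i))) q q'
      + pairDG k l (fun r => W (norm3 (q' j - q' i)) (norm3 (q' k - q' j)) r
          (norm3 (q k - q i)) (norm3 (q l - q j)) (norm3 (q l - q i))) q q'
      + pairDG i k (fun r => W (norm3 (q' j - q' i)) (norm3 (q' k - q' j))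
          (norm3 (q' l - q' k)) r (norm3 (q l - q j)) (norm3 (q l - q i))) q q'
      + pairDG j l (fun r => W (norm3 (q' j - q' i)) (norm3 (q' k - q' j))
          (norm3 (q' l - q' k)) (norm3 (q' k - q' i)) r (norm3 (q l - q i))) q q'
      + pairDG i l (fun r => W (norm3 (q' j - q' i)) (norm3 (q' k - q' j))
          (norm3 (q' l - q' k)) (norm3 (q' k - q' i)) (norm3 (q' l - q' j)) r) q q' := by
  funext u
  rcases eq_or_ne u i with rfl | hi
  · simp [dihedralDG, pairDG, hij, hik, hil]; abel
  rcases eq_or_ne u j with rfl | hj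
  · simp [dihedralDG, pairDG, hi, hjk, hjl]; abel
  rcases eq_or_ne u k with rfl | hk
  · simp [dihedralDG, pairDG, hi, hj, hkl]; abel
  rcases eq_or_ne u l with rfl | hl
  · simp [dihedralDG, pairDG, hi, hj, hk]; abel
  · simp [dihedralDG, pairDG, hi, hj, hk, hl]

lemma isInvariantDG_angleDG {i j k : Fin N} (hij : i ≠ j) (hik : i ≠ k) (hjk : j ≠ k)
    (ψ : ℝ → ℝ → ℝ → ℝ)
    (hji : norm3 (q' i - q' j) ≠ norm3 (q i - q j))
    (hjk' : norm3 (q' k - q' j) ≠ norm3 (q k - q j))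
    (hik' : norm3 (q' k - q' i) ≠ norm3 (q k - q i)) :
    IsInvariantDG q q' (angleDG i j k ψ q q')
      (ψ (norm3 (q' i - q' j)) (norm3 (q' k - q' j)) (norm3 (q' k - q' i))
        - ψ (norm3 (q i - q j)) (norm3 (q k - q j)) (norm3 (q k - q i))) := by
  rw [angleDG_eq_sum_pairDG hij hik hjk]
  convert ((isInvariantDG_pairDG hij.symm _ hji).add (isInvariantDG_pairDG hjk _ hjk')).add
    (isInvariantDG_pairDG hik _ hik') using 1
  ring

lemma isInvariantDG_dihedralDG {i j k l : Fin N} (hij : i ≠ j) (hik : i ≠ k) (hil : i ≠ l)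
    (hjk : j ≠ k) (hjl : j ≠ l) (hkl : k ≠ l) (W : ℝ → ℝ → ℝ → ℝ → ℝ → ℝ → ℝ)
    (hij' : norm3 (q' j - q' i) ≠ norm3 (q j - q i))
    (hjk' : norm3 (q' k - q' j) ≠ norm3 (q k - q j))
    (hkl' : norm3 (q' l - q' k) ≠ norm3 (q l - q k))
    (hik' : norm3 (q' k - q' i) ≠ norm3 (q k - q i))
    (hjl' : norm3 (q' l - q' j) ≠ norm3 (q l - q j))
    (hil' : norm3 (q' l - q' i) ≠ norm3 (q l - q i)) :
    IsInvariantDG q q' (dihedralDG i j k l W q q')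
      (W (norm3 (q' j - q' i)) (norm3 (q' k - q' j)) (norm3 (q' l - q' k))
          (norm3 (q' k - q' i)) (norm3 (q' l - q' j)) (norm3 (q' l - q' i))
        - W (norm3 (q j - q i)) (norm3 (q k - q j)) (norm3 (q l - q k))
          (norm3 (q k - q i)) (norm3 (q l - q j)) (norm3 (q l - q i))) := by
  rw [dihedralDG_eq_sum_pairDG hij hik hil hjk hjl hkl]
  convert (((((isInvariantDG_pairDG hij _ hij').add (isInvariantDG_pairDG hjk _ hjk')).add
    (isInvariantDG_pairDG hkl _ hkl')).add (isInvariantDG_pairDG hik _ hik')).add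
    (isInvariantDG_pairDG hjl _ hjl')).add (isInvariantDG_pairDG hil _ hil') using 1
  ring

end PairDecomposition

section Step

variable {m τ : ℝ} {x x' p p' F : Fin 3 → ℝ}

lemma kineticEnergy_sub (hx : x' = x + (τ / (2 * m)) • (p' + p)) (hp : p' = p - τ • F) :
    norm3 p' ^ 2 / (2 * m) - norm3 p ^ 2 / (2 * m) = -(F ⬝ᵥ (x' - x)) := by
  have hdp : p' - p = -τ • F := by rw [hp]; module
  rw [← sub_div, ← add_dotProduct_sub_self, hdp, hx, add_sub_cancel_left, dotProduct_smul,
    dotProduct_smul, dotProduct_comm, smul_eq_mul, smul_eq_mul]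
  ring

lemma angularMomentum_sub (hx : x' = x + (τ / (2 * m)) • (p' + p)) (hp : p' = p - τ • F) :
    x' ⨯₃ p' - x ⨯₃ p = -(τ / 2) • ((x' + x) ⨯₃ F) := by
  subst hx hp
  ext t
  fin_cases t <;> simp [cross_apply] <;> ring

end Step

theorem velocity_DG_preserves_energy_momentum_angular_momentum_general {N M : ℕ}
    (m : Fin N → ℝ)
    (q qp p pp : Fin N → Fin 3 → ℝ) (τ : ℝ)
    (G : Fin M → Fin N → Fin 3 → ℝ)
    (V : Fin M → (Fin N → Fin 3 → ℝ) → ℝ)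
    (hGV : ∀ c : Fin M,
      (∃ (i j : Fin N) (φ : ℝ → ℝ), i ≠ j ∧
        norm3 (qp j - qp i) ≠ norm3 (q j - q i) ∧
        G c = pairDG i j φ q qp ∧
        V c = fun x => φ (norm3 (x j - x i))) ∨
      (∃ (i j k : Fin N) (ψ : ℝ → ℝ → ℝ → ℝ), i ≠ j ∧ i ≠ k ∧ j ≠ k ∧
        norm3 (qp i - qp j) ≠ norm3 (q i - q j) ∧
        norm3 (qp k - qp j) ≠ norm3 (q k - q j) ∧
        norm3 (qp k - qp i) ≠ norm3 (q k - q i) ∧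
        G c = angleDG i j k ψ q qp ∧
        V c = fun x => ψ (norm3 (x i - x j)) (norm3 (x k - x j)) (norm3 (x k - x i))) ∨
      (∃ (i j k l : Fin N) (W : ℝ → ℝ → ℝ → ℝ → ℝ → ℝ → ℝ),
        i ≠ j ∧ i ≠ k ∧ i ≠ l ∧ j ≠ k ∧ j ≠ l ∧ k ≠ l ∧
        norm3 (qp j - qp i) ≠ norm3 (q j - q i) ∧
        norm3 (qp k - qp j) ≠ norm3 (q k - q j) ∧
        norm3 (qp l - qp k) ≠ norm3 (q l - q k) ∧
        norm3 (qp k - qp i) ≠ norm3 (q k - q i) ∧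
        norm3 (qp l - qp j) ≠ norm3 (q l - q j) ∧
        norm3 (qp l - qp i) ≠ norm3 (q l - q i) ∧
        G c = dihedralDG i j k l W q qp ∧
        V c = fun x => W (norm3 (x j - x i)) (norm3 (x k - x j)) (norm3 (x l - x k))
          (norm3 (x k - x i)) (norm3 (x l - x j)) (norm3 (x l - x i))))
    (hq : ∀ u, qp u = q u + (τ / (2 * m u)) • (pp u + p u))
    (hp : ∀ u, pp u = p u - τ • (∑ c, G c) u) :
    ((∑ u, norm3 (pp u) ^ 2 / (2 * m u)) + ∑ c, V c qp
       = (∑ u, norm3 (p u) ^ 2 / (2 * m u)) + ∑ c, V c q) ∧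
    (∑ u, pp u = ∑ u, p u) ∧
    (∑ u, qp u ⨯₃ pp u = ∑ u, q u ⨯₃ p u) := by
  have hG : IsInvariantDG q qp (∑ c, G c) (∑ c, (V c qp - V c q)) := by
    refine IsInvariantDG.sum _ fun c _ => ?_
    rcases hGV c with ⟨i, j, φ, hij, hr, hGc, hVc⟩ |
      ⟨i, j, k, ψ, hij, hik, hjk, h₁, h₂, h₃, hGc, hVc⟩ |
      ⟨i, j, k, l, W, hij, hik, hil, hjk, hjl, hkl, h₁, h₂, h₃, h₄, h₅, h₆, hGc, hVc⟩
    · rw [hGc, hVc]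
      exact isInvariantDG_pairDG hij φ hr
    · rw [hGc, hVc]
      exact isInvariantDG_angleDG hij hik hjk ψ h₁ h₂ h₃
    · rw [hGc, hVc]
      exact isInvariantDG_dihedralDG hij hik hil hjk hjl hkl W h₁ h₂ h₃ h₄ h₅ h₆
  refine ⟨?_, ?_, ?_⟩
  · have hK := Finset.sum_congr rfl fun u (_ : u ∈ Finset.univ) => kineticEnergy_sub (hq u) (hp u)
    rw [Finset.sum_sub_distrib, Finset.sum_neg_distrib, hG.work_eq, Finset.sum_sub_distrib] at hK
    linarith
  · simp only [hp, Finset.sum_sub_distrib, ← Finset.smul_sum, hG.sum_eq_zero, smul_zero, sub_zero]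
  · rw [← sub_eq_zero, ← Finset.sum_sub_distrib,
      Finset.sum_congr rfl fun u _ => angularMomentum_sub (hq u) (hp u), ← Finset.smul_sum,
      hG.torque_eq_zero, smul_zero]

/-- One step of the velocity discrete gradient method for a particle system whose total
discrete gradient is a sum of pairwise, angle, and dihedral discrete gradients preserves
the energy `H(q,p) = ∑ ‖p_u‖²/(2 m_u) + ∑ V^k(q)`, the total linear momentum, and the
total angular momentum. -/
theorem velocity_DG_preserves_energy_momentum_angular_momentum {N M : ℕ}
    (m : Fin N → ℝ) (hm : ∀ u, 0 < m u)
    (q qp p pp : Fin N → Fin 3 → ℝ) (τ : ℝ)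
    (G : Fin M → Fin N → Fin 3 → ℝ)
    (V : Fin M → (Fin N → Fin 3 → ℝ) → ℝ)
    (hGV : ∀ c : Fin M,
      (∃ (i j : Fin N) (φ : ℝ → ℝ), i ≠ j ∧
        norm3 (qp j - qp i) ≠ norm3 (q j - q i) ∧
        G c = pairDG i j φ q qp ∧
        V c = fun x => φ (norm3 (x j - x i))) ∨
      (∃ (i j k : Fin N) (ψ : ℝ → ℝ → ℝ → ℝ), i ≠ j ∧ i ≠ k ∧ j ≠ k ∧
        norm3 (qp i - qp j) ≠ norm3 (q i - q j) ∧
        norm3 (qp k - qp j) ≠ norm3 (q k - q j) ∧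
        norm3 (qp k - qp i) ≠ norm3 (q k - q i) ∧
        G c = angleDG i j k ψ q qp ∧
        V c = fun x => ψ (norm3 (x i - x j)) (norm3 (x k - x j)) (norm3 (x k - x i))) ∨
      (∃ (i j k l : Fin N) (W : ℝ → ℝ → ℝ → ℝ → ℝ → ℝ → ℝ),
        i ≠ j ∧ i ≠ k ∧ i ≠ l ∧ j ≠ k ∧ j ≠ l ∧ k ≠ l ∧
        norm3 (qp j - qp i) ≠ norm3 (q j - q i) ∧
        norm3 (qp k - qp j) ≠ norm3 (q k - q j) ∧
        norm3 (qp l - qp k) ≠ norm3 (q l - q k) ∧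
        norm3 (qp k - qp i) ≠ norm3 (q k - q i) ∧
        norm3 (qp l - qp j) ≠ norm3 (q l - q j) ∧
        norm3 (qp l - qp i) ≠ norm3 (q l - q i) ∧
        G c = dihedralDG i j k l W q qp ∧
        V c = fun x => W (norm3 (x j - x i)) (norm3 (x k - x j)) (norm3 (x l - x k))
          (norm3 (x k - x i)) (norm3 (x l - x j)) (norm3 (x l - x i))))
    (hq : ∀ u, qp u = q u + (τ / (2 * m u)) • (pp u + p u))
    (hp : ∀ u, pp u = p u - τ • (∑ c, G c) u) :
    ((∑ u, norm3 (pp u) ^ 2 / (2 * m u)) + ∑ c, V c qp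
       = (∑ u, norm3 (p u) ^ 2 / (2 * m u)) + ∑ c, V c q) ∧
    (∑ u, pp u = ∑ u, p u) ∧
    (∑ u, qp u ⨯₃ pp u = ∑ u, q u ⨯₃ p u) :=
  velocity_DG_preserves_energy_momentum_angular_momentum_general m q qp p pp τ G V hGV hq hp
end
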